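/- arXiv:2101.02002 — 3 statements merged into one kernel-verified Lean document; each statement's English description precedes it below -/
import Mathlib

section
/- Let g : [c, ∞) → ℝ be convex, increasing and positive, with right derivative g⁺. If lim_{x→∞} g⁺(x) = ∞, then lim_{x→∞} x / g(x) = 0. -/
open Filter Set

/-- If `g` is convex, increasing and positive on `[c, ∞)` with right derivative `g'`,
and `g' x → ∞` as `x → ∞`, then `x / g x → 0` as `x → ∞`. -/
theorem stmt_1 (c : ℝ) (g g' : ℝ → ℝ)
    (hconv : ConvexOn ℝ (Set.Ici c) g)
    (hmono : StrictMonoOn g (Set.Ici c))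
    (hpos : ∀ x ∈ Set.Ici c, 0 < g x)
    (hderiv : ∀ x ∈ Set.Ici c, HasDerivWithinAt g (g' x) (Set.Ici x) x)
    (hlim : Tendsto g' atTop atTop) :
    Tendsto (fun x => x / g x) atTop (nhds 0) := by
  have key : Tendsto (fun x => g x / x) atTop atTop := by
    rw [tendsto_atTop]
    intro M
    obtain ⟨a, hga, hac⟩ :=
      ((hlim.eventually_ge_atTop (M + 1)).and (eventually_ge_atTop c)).exists
    filter_upwards [eventually_ge_atTop (a + 1), eventually_ge_atTop 1,
      eventually_ge_atTop ((M + 1) * a - g a)] with x h1 h2 h3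
    have hax : a < x := by linarith
    have hxc : x ∈ Set.Ici c := le_trans hac hax.le
    have hx0 : (0 : ℝ) < x := by linarith
    have hslope : g' a ≤ slope g a x := by
      refine hconv.le_slope_of_hasDerivWithinAt_Ioi hac hxc hax ?_
      exact (hderiv a hac).mono Ioi_subset_Ici_self
    rw [slope_def_field, le_div_iff₀ (by linarith : (0:ℝ) < x - a)] at hslope
    rw [le_div_iff₀ hx0]
    nlinarith [hpos a hac]
  have := key.inv_tendsto_atTop
  simpa only [Pi.inv_def, inv_div] using this
end

section
/- Let μ be a measure on ℝ and fix a reference point c. Define u₀ ≡ 1 and inductively u_n(x) = ∫_{(x,∞)} (z − x) u_{n−1}(z) μ(dz) for x ≥ c, and suppose u₁(c) < ∞ and each u_n is finite, nonnegative and decreasing. Then u_n(x) ≤ u₁(x)^n / n! for all n ≥ 1 and x ≥ c. -/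
/-!
Write `m(y) = μ(y, ∞)` and `M(x) = ∫_x^∞ m(y) dy`. Tonelli on the triangle `x < y < z` gives
`∫_{(x,∞)} (z - x) g(z) μ(dz) = ∫_x^∞ ∫_{(y,∞)} g dμ dy`; hence `u₁ = M`, and since `M` decreases,
`(n+1)! |u_{n+1}(x)| ≤ (n+1) ∫_x^∞ m(y) M(y)^n dy` once `n! |u_n| ≤ M^n` is known on `[x, ∞)`.
The last integral is `M(x)^{n+1} / (n+1)`, the integrated chain rule for `dM = -m dy`.
-/

open Filter Set MeasureTheory
open scoped ENNReal Topology Nat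

theorem sigmaFinite_restrict_Ioi_of_integrableOn_sub {μ : Measure ℝ} {x : ℝ}
    (h : IntegrableOn (fun z => z - x) (Ioi x) μ) : SigmaFinite (μ.restrict (Ioi x)) := by
  set b : ℕ → ℝ := fun n => x + 1 / (n + 1)
  have hb : ∀ n, x < b n := fun n => lt_add_of_pos_right x Nat.one_div_pos_of_nat
  refine Measure.sigmaFinite_of_countable (S := insert (Iic x) (range fun n => Ici (b n)))
    ((countable_range _).insert _) ?_ ?_
  · rintro s (rfl | ⟨n, rfl⟩)
    · simp [Measure.restrict_apply measurableSet_Iic, (Iic_disjoint_Ioi le_rfl).inter_eq]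
    · refine (measure_mono fun z (hz : b n ≤ z) => ?_).trans_lt
        (h.measure_norm_ge_lt_top (sub_pos.2 (hb n)))
      exact (sub_le_sub_right hz x).trans (le_abs_self _)
  · have hlim : Tendsto b atTop (𝓝 x) := by
      simpa [b] using tendsto_one_div_add_atTop_nhds_zero_nat.const_add x
    rw [sUnion_insert, sUnion_range, iUnion_Ici_eq_Ioi_of_lt_of_tendsto hb hlim, Iic_union_Ioi]

theorem lintegral_Ioi_mul_lintegral_Ioi_swap (ρ ν : Measure ℝ) [SFinite ρ] {x : ℝ}
    [SFinite (ν.restrict (Ioi x))] {f g : ℝ → ℝ≥0∞} (hf : Measurable f) (hg : Measurable g) :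
    ∫⁻ y in Ioi x, f y * ∫⁻ z in Ioi y, g z ∂ν ∂ρ
      = ∫⁻ z in Ioi x, (∫⁻ y in Ioo x z, f y ∂ρ) * g z ∂ν := by
  set F : ℝ → ℝ → ℝ≥0∞ := fun y z => if y < z then f y * g z else 0
  have hF : Measurable (Function.uncurry F) :=
    Measurable.ite (measurableSet_lt measurable_fst measurable_snd)
      ((hf.comp measurable_fst).mul (hg.comp measurable_snd)) measurable_const
  have inner_z : ∀ y ∈ Ioi x, f y * ∫⁻ z in Ioi y, g z ∂ν = ∫⁻ z in Ioi x, F y z ∂ν := by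
    intro y hy
    have : F y = (Ioi y).indicator fun z => f y * g z := by
      ext z; simp [F, indicator_apply]
    rw [this, setLIntegral_indicator measurableSet_Ioi,
      Ioi_inter_Ioi, sup_eq_left.2 (le_of_lt hy), lintegral_const_mul _ hg]
  have inner_y : ∀ z, (∫⁻ y in Ioo x z, f y ∂ρ) * g z = ∫⁻ y in Ioi x, F y z ∂ρ := by
    intro z
    have : (fun y => F y z) = (Iio z).indicator fun y => f y * g z := by
      ext y; simp [F, indicator_apply]
    rw [this, setLIntegral_indicator measurableSet_Iio, Iio_inter_Ioi,
      lintegral_mul_const _ hf]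
  calc ∫⁻ y in Ioi x, f y * ∫⁻ z in Ioi y, g z ∂ν ∂ρ
      = ∫⁻ y in Ioi x, ∫⁻ z in Ioi x, F y z ∂ν ∂ρ :=
        setLIntegral_congr_fun measurableSet_Ioi inner_z
    _ = ∫⁻ z in Ioi x, ∫⁻ y in Ioi x, F y z ∂ρ ∂ν := lintegral_lintegral_swap hF.aemeasurable
    _ = ∫⁻ z in Ioi x, (∫⁻ y in Ioo x z, f y ∂ρ) * g z ∂ν := by simp_rw [inner_y]

theorem lintegral_Ioi_ofReal_sub_mul (μ : Measure ℝ) {x : ℝ} [SFinite (μ.restrict (Ioi x))]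
    {g : ℝ → ℝ≥0∞} (hg : Measurable g) :
    ∫⁻ z in Ioi x, ENNReal.ofReal (z - x) * g z ∂μ = ∫⁻ y in Ioi x, ∫⁻ z in Ioi y, g z ∂μ := by
  simpa [Real.volume_Ioo] using
    (lintegral_Ioi_mul_lintegral_Ioi_swap volume μ measurable_const hg (f := 1)).symm

theorem measurable_lintegral_Ioi (ρ : Measure ℝ) (m : ℝ → ℝ≥0∞) :
    Measurable fun y => ∫⁻ t in Ioi y, m t ∂ρ :=
  Antitone.measurable fun _ _ hab => lintegral_mono_set (Ioi_subset_Ioi hab)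

theorem lintegral_Ioo_add_lintegral_Ioi (ρ : Measure ℝ) [NullSingletonClass ρ] (f : ℝ → ℝ≥0∞)
    {x t : ℝ} (hxt : x ≤ t) :
    ∫⁻ y in Ioo x t, f y ∂ρ + ∫⁻ y in Ioi t, f y ∂ρ = ∫⁻ y in Ioi x, f y ∂ρ := by
  rw [setLIntegral_congr Ioo_ae_eq_Ioc, ← lintegral_union measurableSet_Ioi Ioc_disjoint_Ioi_same,
    Ioc_union_Ioi_eq_Ioi hxt]

/-- Splitting `(x, ∞)` at `t` turns the induction hypothesis into
`(n+1) ∫_{(x,t)} m M^n + M(t)^{n+1} = M(x)^{n+1}`; integrating this against `m(t) dt` and using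
Tonelli gives the next case without any subtraction, so no finiteness is needed. -/
theorem natCast_add_one_mul_lintegral_Ioi_mul_pow (ρ : Measure ℝ) [SFinite ρ] [NullSingletonClass ρ]
    {m : ℝ → ℝ≥0∞} (hm : Measurable m) (n : ℕ) (x : ℝ) :
    (n + 1) * ∫⁻ y in Ioi x, m y * (∫⁻ t in Ioi y, m t ∂ρ) ^ n ∂ρ
      = (∫⁻ t in Ioi x, m t ∂ρ) ^ (n + 1) := by
  set M : ℝ → ℝ≥0∞ := fun y => ∫⁻ t in Ioi y, m t ∂ρ
  have hM : Measurable M := measurable_lintegral_Ioi ρ m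
  induction n generalizing x with
  | zero => simp
  | succ n ih =>
    set J : ℝ → ℝ≥0∞ := fun t => ∫⁻ y in Ioo x t, m y * M y ^ n ∂ρ
    have split : ∀ t ∈ Ioi x, ((n + 1) * J t + M t ^ (n + 1)) * m t = M x ^ (n + 1) * m t := by
      intro t ht
      rw [← ih x, ← ih t, ← mul_add, lintegral_Ioo_add_lintegral_Ioi ρ _ (le_of_lt ht)]
    have swap : ∫⁻ y in Ioi x, m y * M y ^ (n + 1) ∂ρ = ∫⁻ t in Ioi x, J t * m t ∂ρ := by
      simp_rw [pow_succ, ← mul_assoc]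
      exact lintegral_Ioi_mul_lintegral_Ioi_swap ρ ρ (hm.mul (hM.pow_const n)) hm
    calc ((n + 1 : ℕ) + 1 : ℝ≥0∞) * ∫⁻ y in Ioi x, m y * M y ^ (n + 1) ∂ρ
        = (n + 1) * ∫⁻ t in Ioi x, J t * m t ∂ρ + ∫⁻ t in Ioi x, M t ^ (n + 1) * m t ∂ρ := by
          simp_rw [← swap, mul_comm (M _ ^ _) (m _)]
          push_cast
          ring
      _ = ∫⁻ t in Ioi x, ((n + 1) * J t + M t ^ (n + 1)) * m t ∂ρ := by
          rw [← lintegral_const_mul' _ _ (by simp),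
            ← lintegral_add_right _ (g := fun t => M t ^ (n + 1) * m t) ((hM.pow_const _).mul hm)]
          simp_rw [add_mul, mul_assoc]
      _ = M x ^ (n + 1 + 1) := by
          rw [setLIntegral_congr_fun measurableSet_Ioi split, lintegral_const_mul _ hm]
          exact (pow_succ _ _).symm

theorem natCast_add_one_mul_lintegral_Ioi_ofReal_sub_mul_pow_le (μ : Measure ℝ) {x : ℝ}
    [SFinite (μ.restrict (Ioi x))] (n : ℕ) :
    (n + 1) * ∫⁻ z in Ioi x, ENNReal.ofReal (z - x) * (∫⁻ t in Ioi z, μ (Ioi t)) ^ n ∂μ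
      ≤ (∫⁻ t in Ioi x, μ (Ioi t)) ^ (n + 1) := by
  set M : ℝ → ℝ≥0∞ := fun y => ∫⁻ t in Ioi y, μ (Ioi t)
  have hm : Measurable fun t => μ (Ioi t) :=
    Antitone.measurable fun _ _ hab => measure_mono (Ioi_subset_Ioi hab)
  have tail_le : ∀ y, ∫⁻ z in Ioi y, M z ^ n ∂μ ≤ μ (Ioi y) * M y ^ n := fun y =>
    calc ∫⁻ z in Ioi y, M z ^ n ∂μ ≤ ∫⁻ _ in Ioi y, M y ^ n ∂μ :=
          setLIntegral_mono' measurableSet_Ioi fun z hz =>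
            pow_le_pow_left' (lintegral_mono_set (Ioi_subset_Ioi (le_of_lt hz))) n
      _ = μ (Ioi y) * M y ^ n := by rw [setLIntegral_const, mul_comm]
  calc (n + 1) * ∫⁻ z in Ioi x, ENNReal.ofReal (z - x) * M z ^ n ∂μ
      = (n + 1) * ∫⁻ y in Ioi x, ∫⁻ z in Ioi y, M z ^ n ∂μ := by
        rw [lintegral_Ioi_ofReal_sub_mul μ ((measurable_lintegral_Ioi volume _).pow_const n)]
    _ ≤ (n + 1) * ∫⁻ y in Ioi x, μ (Ioi y) * M y ^ n := by gcongr with y; exact tail_le y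
    _ = M x ^ (n + 1) := natCast_add_one_mul_lintegral_Ioi_mul_pow volume hm n x

theorem ofReal_setIntegral_Ioi_sub (μ : Measure ℝ) {x : ℝ}
    (h : IntegrableOn (fun z => z - x) (Ioi x) μ) :
    ENNReal.ofReal (∫ z in Ioi x, (z - x) ∂μ) = ∫⁻ y in Ioi x, μ (Ioi y) := by
  have := sigmaFinite_restrict_Ioi_of_integrableOn_sub h
  have hpos : 0 ≤ᵐ[μ.restrict (Ioi x)] fun z => z - x :=
    (ae_restrict_mem measurableSet_Ioi).mono fun z hz => sub_nonneg.2 (le_of_lt hz)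
  rw [ofReal_integral_eq_lintegral_ofReal h hpos]
  simpa using lintegral_Ioi_ofReal_sub_mul μ (x := x) (g := 1) measurable_const

theorem factorial_mul_enorm_le_pow {μ : Measure ℝ} {c : ℝ} {u : ℕ → ℝ → ℝ}
    (h0 : ∀ x, u 0 x = 1)
    (hrec : ∀ n, ∀ x ∈ Ici c, u (n + 1) x = ∫ z in Ioi x, (z - x) * u n z ∂μ)
    (hint : ∀ n, ∀ x ∈ Ici c, IntegrableOn (fun z => (z - x) * u n z) (Ioi x) μ)
    (n : ℕ) {x : ℝ} (hx : x ∈ Ici c) :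
    n ! * ‖u n x‖ₑ ≤ (∫⁻ y in Ioi x, μ (Ioi y)) ^ n := by
  induction n generalizing x with
  | zero => simp [h0]
  | succ n ih =>
    have : SigmaFinite (μ.restrict (Ioi x)) :=
      sigmaFinite_restrict_Ioi_of_integrableOn_sub (by simpa [h0] using hint 0 x hx)
    have hfac : ((n + 1)! : ℝ≥0∞) = (n + 1) * n ! := by push_cast [Nat.factorial_succ]; rfl
    calc ((n + 1)! : ℝ≥0∞) * ‖u (n + 1) x‖ₑ
        ≤ (n + 1) * n ! * ∫⁻ z in Ioi x, ‖(z - x) * u n z‖ₑ ∂μ := by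
          rw [hfac, hrec n x hx]; gcongr; exact enorm_integral_le_lintegral_enorm _
      _ = (n + 1) * ∫⁻ z in Ioi x, ENNReal.ofReal (z - x) * (n ! * ‖u n z‖ₑ) ∂μ := by
          rw [mul_assoc, ← lintegral_const_mul' _ _ (by simp)]
          congr 1
          refine setLIntegral_congr_fun measurableSet_Ioi fun z hz => ?_
          rw [enorm_mul, Real.enorm_of_nonneg (sub_nonneg.2 (le_of_lt hz))]
          ring
      _ ≤ (n + 1) * ∫⁻ z in Ioi x, ENNReal.ofReal (z - x) * (∫⁻ t in Ioi z, μ (Ioi t)) ^ n ∂μ := by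
          refine mul_le_mul_right (setLIntegral_mono' measurableSet_Ioi fun z hz => ?_) _
          gcongr
          exact ih (mem_Ici.2 (le_trans hx (le_of_lt hz)))
      _ ≤ (∫⁻ y in Ioi x, μ (Ioi y)) ^ (n + 1) :=
          natCast_add_one_mul_lintegral_Ioi_ofReal_sub_mul_pow_le μ n

theorem stmt_5_general (μ : Measure ℝ) (c : ℝ) (u : ℕ → ℝ → ℝ)
    (h0 : ∀ x, u 0 x = 1)
    (hrec : ∀ n, ∀ x ∈ Set.Ici c,
      u (n + 1) x = ∫ z in Set.Ioi x, (z - x) * u n z ∂μ)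
    (hint : ∀ n, ∀ x ∈ Set.Ici c,
      IntegrableOn (fun z => (z - x) * u n z) (Set.Ioi x) μ) :
    ∀ n, 1 ≤ n → ∀ x ∈ Set.Ici c, u n x ≤ (u 1 x) ^ n / (Nat.factorial n) := by
  intro n _ x hx
  have hu1 : u 1 x = ∫ z in Ioi x, (z - x) ∂μ := by simpa [h0] using hrec 0 x hx
  have hu1_nonneg : 0 ≤ u 1 x :=
    hu1 ▸ setIntegral_nonneg measurableSet_Ioi fun z hz => sub_nonneg.2 (le_of_lt hz)
  have key := factorial_mul_enorm_le_pow h0 hrec hint n hx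
  rw [← ofReal_setIntegral_Ioi_sub μ (by simpa [h0] using hint 0 x hx), ← hu1,
    ← ENNReal.ofReal_pow hu1_nonneg, Real.enorm_eq_ofReal_abs, ← ENNReal.ofReal_natCast,
    ← ENNReal.ofReal_mul (by positivity), ENNReal.ofReal_le_ofReal_iff (by positivity)] at key
  rw [le_div_iff₀ (by positivity), mul_comm]
  exact (mul_le_mul_of_nonneg_left (le_abs_self _) (by positivity)).trans key

/-- For the recursive functions `u₀ ≡ 1`, `u_{n+1}(x) = ∫_{(x,∞)} (z − x) u_n(z) μ(dz)`,
which are nonnegative, decreasing and finite (integrable) on `[c, ∞)`, one has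
`u_n(x) ≤ u₁(x)^n / n!` for all `n ≥ 1` and `x ≥ c`. -/
theorem stmt_5 (μ : Measure ℝ) (c : ℝ) (u : ℕ → ℝ → ℝ)
    (h0 : ∀ x, u 0 x = 1)
    (hrec : ∀ n, ∀ x ∈ Set.Ici c,
      u (n + 1) x = ∫ z in Set.Ioi x, (z - x) * u n z ∂μ)
    (hint : ∀ n, ∀ x ∈ Set.Ici c,
      IntegrableOn (fun z => (z - x) * u n z) (Set.Ioi x) μ)
    (hnonneg : ∀ n, ∀ x ∈ Set.Ici c, 0 ≤ u n x)
    (hanti : ∀ n, AntitoneOn (u n) (Set.Ici c)) :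
    ∀ n, 1 ≤ n → ∀ x ∈ Set.Ici c, u n x ≤ (u 1 x) ^ n / (Nat.factorial n) :=
  stmt_5_general μ c u h0 hrec hint
end

section
/- Let x ∈ ℝ, l ∈ ℝ, and for each y ≥ x let τ_y be a nonnegative (possibly infinite) random variable on a probability space (Ω, P_x), with |y| P_x(τ_y ≤ t) ≤ C for a constant C and all y, t. Then: lim_{y→∞} y P_x(τ_y ≤ t) = 0 for all t > 0 if and only if lim_{y→∞} y E_x[e^{−ατ_y}] = 0 for all α > 0. -/
open Filter Set MeasureTheory
open scoped ENNReal Topology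

/-!
Writing `e^{-α s} = ∫_{t > 0, s ≤ t} α e^{-α t} dt` and using Fubini gives
`E[e^{-ατ}] = ∫_0^∞ P(τ ≤ t) α e^{-αt} dt`. If `y P(τ_y ≤ t) → 0` for every `t > 0`, dominated
convergence with the bound `C α e^{-αt}` yields `y E[e^{-ατ_y}] → 0`. Conversely, Markov's
inequality `P(τ ≤ t) ≤ e^{αt} E[e^{-ατ}]` transfers the decay back.
-/

noncomputable def expNegMul (α : ℝ) (s : ℝ≥0∞) : ℝ :=
  if s = ∞ then 0 else Real.exp (-α * s.toReal)

lemma expNegMul_nonneg (α : ℝ) (s : ℝ≥0∞) : 0 ≤ expNegMul α s := by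
  unfold expNegMul
  split_ifs <;> positivity

lemma expNegMul_le_one {α : ℝ} (hα : 0 ≤ α) (s : ℝ≥0∞) : expNegMul α s ≤ 1 := by
  unfold expNegMul
  split_ifs
  · exact zero_le_one
  · exact Real.exp_le_one_iff.2 (by nlinarith [s.toReal_nonneg])

lemma measurable_expNegMul (α : ℝ) : Measurable (expNegMul α) :=
  Measurable.ite (measurableSet_singleton ∞) measurable_const
    (Real.measurable_exp.comp (measurable_const.mul ENNReal.measurable_toReal))

lemma exp_neg_mul_le_expNegMul {α t : ℝ} (hα : 0 ≤ α) (ht : 0 ≤ t) {s : ℝ≥0∞}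
    (hs : s ≤ ENNReal.ofReal t) : Real.exp (-α * t) ≤ expNegMul α s := by
  have hs_top : s ≠ ∞ := ne_top_of_le_ne_top ENNReal.ofReal_ne_top hs
  rw [expNegMul, if_neg hs_top]
  exact Real.exp_le_exp.2 (by nlinarith [ENNReal.toReal_le_of_le_ofReal ht hs])

lemma expNegMul_eq_setIntegral_indicator {α : ℝ} (hα : 0 < α) (s : ℝ≥0∞) :
    expNegMul α s = ∫ t in Ioi 0,
      {t : ℝ | s ≤ ENNReal.ofReal t}.indicator (fun t => α * Real.exp (-α * t)) t := by
  rcases eq_or_ne s ∞ with rfl | hs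
  · simp [expNegMul]
  set g : ℝ → ℝ := fun t => α * Real.exp (-α * t)
  have hr : 0 ≤ s.toReal := s.toReal_nonneg
  have hind : EqOn ({t : ℝ | s ≤ ENNReal.ofReal t}.indicator g) ((Ici s.toReal).indicator g)
      (Ici 0) := fun t ht => by
    simp only [indicator, mem_ofPred_eq, mem_Ici, ENNReal.le_ofReal_iff_toReal_le hs ht]
  calc expNegMul α s = ∫ t in Ioi s.toReal, g t := by
        rw [integral_const_mul, integral_exp_mul_Ioi (by linarith), expNegMul, if_neg hs]
        field_simp
    _ = ∫ t in Ici 0, (Ici s.toReal).indicator g t := by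
        rw [integral_indicator measurableSet_Ici, Measure.restrict_restrict measurableSet_Ici,
          Ici_inter_Ici, max_eq_left hr, integral_Ici_eq_integral_Ioi]
    _ = ∫ t in Ici 0, {t : ℝ | s ≤ ENNReal.ofReal t}.indicator g t :=
        (setIntegral_congr_fun measurableSet_Ici hind).symm
    _ = _ := integral_Ici_eq_integral_Ioi

section RandomTime

variable {Ω : Type*} [MeasurableSpace Ω] (μ : Measure Ω) [IsFiniteMeasure μ]
  {τ : Ω → ℝ≥0∞}

lemma integrable_expNegMul (hτ : Measurable τ) {α : ℝ} (hα : 0 ≤ α) :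
    Integrable (fun ω => expNegMul α (τ ω)) μ :=
  (integrable_const 1).mono' ((measurable_expNegMul α).comp hτ).aestronglyMeasurable
    (ae_of_all _ fun ω => by
      rw [Real.norm_of_nonneg (expNegMul_nonneg α _)]
      exact expNegMul_le_one hα _)

lemma measureReal_le_exp_mul_integral_expNegMul (hτ : Measurable τ) {α t : ℝ} (hα : 0 ≤ α)
    (ht : 0 ≤ t) :
    μ.real {ω | τ ω ≤ ENNReal.ofReal t}
      ≤ Real.exp (α * t) * ∫ ω, expNegMul α (τ ω) ∂μ := by
  have hB : MeasurableSet {ω | τ ω ≤ ENNReal.ofReal t} := measurableSet_le hτ measurable_const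
  have hmarkov : Real.exp (-α * t) * μ.real {ω | τ ω ≤ ENNReal.ofReal t}
      ≤ ∫ ω, expNegMul α (τ ω) ∂μ := by
    rw [mul_comm, ← smul_eq_mul, ← integral_indicator_const _ hB]
    exact integral_mono ((integrable_const _).indicator hB) (integrable_expNegMul μ hτ hα)
      (indicator_le' (fun ω hω => exp_neg_mul_le_expNegMul hα ht hω)
        (fun ω _ => expNegMul_nonneg α _))
  calc μ.real {ω | τ ω ≤ ENNReal.ofReal t}
      = Real.exp (α * t) * (Real.exp (-α * t) * μ.real {ω | τ ω ≤ ENNReal.ofReal t}) := by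
        rw [← mul_assoc, ← Real.exp_add]
        simp
    _ ≤ _ := by gcongr

lemma integral_expNegMul_eq_setIntegral (hτ : Measurable τ) {α : ℝ} (hα : 0 < α) :
    ∫ ω, expNegMul α (τ ω) ∂μ
      = ∫ t in Ioi 0, μ.real {ω | τ ω ≤ ENNReal.ofReal t} * (α * Real.exp (-α * t)) := by
  set g : ℝ → ℝ := fun t => α * Real.exp (-α * t)
  set S : Set (Ω × ℝ) := {p | τ p.1 ≤ ENNReal.ofReal p.2}
  have hS : MeasurableSet S :=
    measurableSet_le (hτ.comp measurable_fst) (ENNReal.measurable_ofReal.comp measurable_snd)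
  have hint : Integrable (S.indicator fun p => g p.2) (μ.prod (volume.restrict (Ioi 0))) :=
    (((exp_neg_integrableOn_Ioi 0 hα).const_mul α).comp_snd μ).indicator hS
  calc ∫ ω, expNegMul α (τ ω) ∂μ
      = ∫ ω, (∫ t in Ioi 0, S.indicator (fun p => g p.2) (ω, t)) ∂μ := by
        congr with ω
        exact expNegMul_eq_setIntegral_indicator hα _
    _ = ∫ t in Ioi 0, ∫ ω, S.indicator (fun p => g p.2) (ω, t) ∂μ :=
        integral_integral_swap (f := fun ω t => S.indicator (fun p => g p.2) (ω, t)) hint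
    _ = _ := by
        congr with t
        exact integral_indicator_const (s := {ω | τ ω ≤ ENNReal.ofReal t}) (g t)
          (measurableSet_le hτ measurable_const)

end RandomTime

section Limits

variable {Ω : Type*} [MeasurableSpace Ω] (μ : Measure Ω) [IsFiniteMeasure μ]
  {ι : Type*} {l : Filter ι} {c : ι → ℝ} {τ : ι → Ω → ℝ≥0∞}

lemma tendsto_mul_integral_expNegMul_of_tendsto_mul_measureReal [l.IsCountablyGenerated]
    (hτ : ∀ i, Measurable (τ i))
    {C : ℝ} (hC : ∀ i t, 0 < t → |c i| * μ.real {ω | τ i ω ≤ ENNReal.ofReal t} ≤ C)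
    (hlim : ∀ t, 0 < t →
      Tendsto (fun i => c i * μ.real {ω | τ i ω ≤ ENNReal.ofReal t}) l (𝓝 0))
    {α : ℝ} (hα : 0 < α) :
    Tendsto (fun i => c i * ∫ ω, expNegMul α (τ i ω) ∂μ) l (𝓝 0) := by
  set g : ℝ → ℝ := fun t => α * Real.exp (-α * t)
  have hg : 0 ≤ g := fun t => by positivity
  set F : ι → ℝ → ℝ := fun i t => c i * (μ.real {ω | τ i ω ≤ ENNReal.ofReal t} * g t)
  have hF : ∀ i, c i * ∫ ω, expNegMul α (τ i ω) ∂μ = ∫ t in Ioi 0, F i t := fun i => by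
    rw [integral_expNegMul_eq_setIntegral μ (hτ i) hα, integral_const_mul]
  have hF_meas : ∀ i, AEStronglyMeasurable (F i) (volume.restrict (Ioi 0)) := fun i => by
    have hmono : Monotone fun t => μ.real {ω | τ i ω ≤ ENNReal.ofReal t} := fun s t hst =>
      measureReal_mono fun ω hω => hω.trans (ENNReal.ofReal_le_ofReal hst)
    exact (measurable_const.mul (hmono.measurable.mul (measurable_const.mul
      (Real.measurable_exp.comp (measurable_id.const_mul _))))).aestronglyMeasurable
  have hF_le : ∀ i, ∀ᵐ t ∂volume.restrict (Ioi 0), ‖F i t‖ ≤ C * g t := fun i => by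
    refine (ae_restrict_iff' measurableSet_Ioi).2 (ae_of_all _ fun t ht => ?_)
    rw [Real.norm_eq_abs, abs_mul, abs_of_nonneg (mul_nonneg measureReal_nonneg (hg t)),
      ← mul_assoc]
    exact mul_le_mul_of_nonneg_right (hC i t ht) (hg t)
  have hF_lim : ∀ᵐ t ∂volume.restrict (Ioi 0), Tendsto (F · t) l (𝓝 0) := by
    refine (ae_restrict_iff' measurableSet_Ioi).2 (ae_of_all _ fun t ht => ?_)
    simpa [F, mul_assoc] using (hlim t ht).mul_const (g t)
  simp_rw [hF]
  simpa using tendsto_integral_filter_of_dominated_convergence (fun t => C * g t)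
    (Eventually.of_forall hF_meas) (Eventually.of_forall hF_le)
    (((exp_neg_integrableOn_Ioi 0 hα).const_mul α).const_mul C) hF_lim

lemma tendsto_mul_measureReal_of_tendsto_mul_integral_expNegMul (hτ : ∀ i, Measurable (τ i))
    {α : ℝ} (hα : 0 ≤ α) (hlim : Tendsto (fun i => c i * ∫ ω, expNegMul α (τ i ω) ∂μ) l (𝓝 0))
    {t : ℝ} (ht : 0 ≤ t) :
    Tendsto (fun i => c i * μ.real {ω | τ i ω ≤ ENNReal.ofReal t}) l (𝓝 0) := by
  refine squeeze_zero_norm (fun i => ?_) (by simpa using hlim.norm.const_mul (Real.exp (α * t)))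
  have hE : 0 ≤ ∫ ω, expNegMul α (τ i ω) ∂μ := integral_nonneg fun ω => expNegMul_nonneg α _
  simp only [norm_mul, Real.norm_eq_abs, abs_of_nonneg measureReal_nonneg, abs_of_nonneg hE]
  rw [mul_left_comm]
  gcongr
  exact measureReal_le_exp_mul_integral_expNegMul μ (hτ i) hα ht

end Limits

theorem stmt_9_general {Ω : Type*} [MeasurableSpace Ω] (μ : Measure Ω) [IsProbabilityMeasure μ]
    (C : ℝ) (τ : ℝ → Ω → ℝ≥0∞)
    (hτ : ∀ y, Measurable (τ y))
    (hC : ∀ y t : ℝ, 0 < t →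
      |y| * (μ {ω | τ y ω ≤ ENNReal.ofReal t}).toReal ≤ C) :
    (∀ t : ℝ, 0 < t →
        Tendsto (fun y => y * (μ {ω | τ y ω ≤ ENNReal.ofReal t}).toReal) atTop (nhds 0))
      ↔
    (∀ α : ℝ, 0 < α →
        Tendsto (fun y =>
            y * ∫ ω, (if τ y ω = ∞ then 0 else Real.exp (-α * (τ y ω).toReal)) ∂μ)
          atTop (nhds 0)) :=
  ⟨fun hP _ hα =>
    tendsto_mul_integral_expNegMul_of_tendsto_mul_measureReal μ hτ hC hP hα,
    fun hE _ ht => tendsto_mul_measureReal_of_tendsto_mul_integral_expNegMul μ hτ zero_le_one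
      (hE 1 one_pos) ht.le⟩

/-- Let `(τ_y)_{y ≥ x}` be nonnegative (possibly infinite) random variables with the uniform
bound `|y| P(τ_y ≤ t) ≤ C`.  Then `lim_{y→∞} y P(τ_y ≤ t) = 0` for all `t > 0` iff
`lim_{y→∞} y E[e^{−ατ_y}] = 0` for all `α > 0` (with `e^{−ατ_y} := 0` on `{τ_y = ∞}`). -/
theorem stmt_9 {Ω : Type*} [MeasurableSpace Ω] (μ : Measure Ω) [IsProbabilityMeasure μ]
    (x C : ℝ) (τ : ℝ → Ω → ℝ≥0∞)
    (hτ : ∀ y, Measurable (τ y))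
    (hC : ∀ y t : ℝ, 0 < t →
      |y| * (μ {ω | τ y ω ≤ ENNReal.ofReal t}).toReal ≤ C) :
    (∀ t : ℝ, 0 < t →
        Tendsto (fun y => y * (μ {ω | τ y ω ≤ ENNReal.ofReal t}).toReal) atTop (nhds 0))
      ↔
    (∀ α : ℝ, 0 < α →
        Tendsto (fun y =>
            y * ∫ ω, (if τ y ω = ∞ then 0 else Real.exp (-α * (τ y ω).toReal)) ∂μ)
          atTop (nhds 0)) :=
  stmt_9_general μ C τ hτ hC
end
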